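/- Let N \u2265 1, let A \u2208 \u211d^{N\u00d7N}, \u03c3 \u2208 \u211d, \u03c9 \u2208 \u211d^N, and suppose \u03b8_1, \u2026, \u03b8_N : \u211d \u2192 \u211d are differentiable and satisfy the Kuramoto equations \u03b8_i'(t) = \u03c9_i + \u03c3 \u2211_{k=1}^N A_{ik} sin(\u03b8_k(t) \u2212 \u03b8_i(t)) for all t. If the system phase-synchronizes, i.e., \u03b8_i(t) \u2212 \u03b8_j(t) \u2192 0 as t \u2192 \u221e for every pair i, j, then all natural frequencies are equal: \u03c9_i = \u03c9_j for all i, j. In particular, phase synchronization cannot hold for non-identical oscillators. -/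

import Mathlib

/-! Under phase synchronization every `sin (θ k - θ i)` tends to `0`, so the derivative of
`θ i - θ j` tends to `ω i - ω j`. A function with a finite limit at `+∞` whose derivative also
has a limit there must have derivative limit `0`; hence `ω i = ω j`. -/

open Finset Real Filter Topology

/- Along the integers the mean value theorem writes `f (n + 1) - f n`, which tends to `0`,
as a value of `deriv f` at a point of `(n, n + 1)`; these points tend to `+∞`, so the limit of
`deriv f` must be `0`. -/
theorem eq_zero_of_tendsto_deriv_atTop {f : ℝ → ℝ} {a L : ℝ} (hf : Differentiable ℝ f)
    (hfa : Tendsto f atTop (𝓝 a)) (hf' : Tendsto (deriv f) atTop (𝓝 L)) : L = 0 := by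
  choose c hc hslope using fun n : ℕ =>
    exists_deriv_eq_slope f (lt_add_one (n : ℝ)) hf.continuous.continuousOn
      fun x _ => (hf x).differentiableWithinAt
  have hc_top : Tendsto c atTop atTop :=
    tendsto_atTop_mono (fun n => (hc n).1.le) tendsto_natCast_atTop_atTop
  have hincr : Tendsto (fun n : ℕ => (f (n + 1) - f n) / ((n : ℝ) + 1 - n)) atTop (𝓝 0) := by
    have hn := tendsto_natCast_atTop_atTop (R := ℝ)
    simpa using (hfa.comp (tendsto_atTop_add_const_right _ 1 hn)).sub (hfa.comp hn)
  exact tendsto_nhds_unique (hf'.comp hc_top) (hincr.congr fun n => (hslope n).symm)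

noncomputable def kuramotoCoupling {ι : Type*} [Fintype ι] (A : ι → ι → ℝ) (θ : ι → ℝ) (i : ι) :
    ℝ :=
  ∑ k, A i k * sin (θ k - θ i)

theorem tendsto_kuramotoCoupling_zero {ι α : Type*} [Fintype ι] {l : Filter α}
    (A : ι → ι → ℝ) {θ : ι → α → ℝ} {i : ι}
    (hsync : ∀ k, Tendsto (fun t => θ k t - θ i t) l (𝓝 0)) :
    Tendsto (fun t => kuramotoCoupling A (fun k => θ k t) i) l (𝓝 0) := by
  have hsin : ∀ k, Tendsto (fun t => sin (θ k t - θ i t)) l (𝓝 0) := fun k =>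
    sin_zero ▸ (continuous_sin.tendsto 0).comp (hsync k)
  simpa [kuramotoCoupling] using tendsto_finsetSum univ fun k _ => (hsin k).const_mul (A i k)

theorem kuramoto_phase_sync_implies_identical_general (N : ℕ)
    (A : Fin N → Fin N → ℝ) (σ : ℝ) (ω : Fin N → ℝ) (θ : Fin N → ℝ → ℝ)
    (hdiff : ∀ i, Differentiable ℝ (θ i))
    (hode : ∀ i t, deriv (θ i) t
      = ω i + σ * ∑ k : Fin N, A i k * Real.sin (θ k t - θ i t))
    (hsync : ∀ i j, Tendsto (fun t => θ i t - θ j t) atTop (nhds 0)) :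
    ∀ i j, ω i = ω j := by
  intro i j
  have hderiv : ∀ t, deriv (fun t => θ i t - θ j t) t = ω i - ω j +
      σ * (kuramotoCoupling A (fun k => θ k t) i - kuramotoCoupling A (fun k => θ k t) j) := by
    intro t
    rw [deriv_fun_sub (hdiff i t) (hdiff j t), hode i t, hode j t, kuramotoCoupling,
      kuramotoCoupling]
    ring
  have hlim : Tendsto (deriv fun t => θ i t - θ j t) atTop (𝓝 (ω i - ω j)) := by
    have hcoupling := (tendsto_kuramotoCoupling_zero A fun k => hsync k i).sub
      (tendsto_kuramotoCoupling_zero A fun k => hsync k j)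
    simpa [funext hderiv] using (hcoupling.const_mul σ).const_add (ω i - ω j)
  exact sub_eq_zero.1 (eq_zero_of_tendsto_deriv_atTop ((hdiff i).sub (hdiff j)) (hsync i j) hlim)

/-- If a Kuramoto system phase-synchronizes (all pairwise phase differences
tend to `0`), then all natural frequencies are equal; in particular phase
synchronization cannot hold for non-identical oscillators. -/
theorem kuramoto_phase_sync_implies_identical (N : ℕ) (hN : 1 ≤ N)
    (A : Fin N → Fin N → ℝ) (σ : ℝ) (ω : Fin N → ℝ) (θ : Fin N → ℝ → ℝ)
    (hdiff : ∀ i, Differentiable ℝ (θ i))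
    (hode : ∀ i t, deriv (θ i) t
      = ω i + σ * ∑ k : Fin N, A i k * Real.sin (θ k t - θ i t))
    (hsync : ∀ i j, Tendsto (fun t => θ i t - θ j t) atTop (nhds 0)) :
    ∀ i j, ω i = ω j :=
  kuramoto_phase_sync_implies_identical_general N A σ ω θ hdiff hode hsync
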